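/- arXiv:1802.06621 — 2 statements merged into one kernel-verified Lean document; each statement's English description precedes it below -/
import Mathlib

section
/- The set of maximum weight ideal cuts in an edge-weighted DAG forms a lattice under the operations of set union (join) and set intersection (meet). -/
/-- An ideal cut: `s ∈ S`, `t ∉ S`, and no edge of `E` enters `S` from its complement. -/
def IdealCut {V : Type*} (E : V → V → Prop) (s t : V) (S : Finset V) : Prop :=
  s ∈ S ∧ t ∉ S ∧ ∀ u v : V, E u v → v ∈ S → u ∈ S

/-- The weight of the cut: total weight of edges from `S` to its complement. -/
def cutWeight {V : Type*} [Fintype V] [DecidableEq V] (E : V → V → Prop) [DecidableRel E]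
    (w : V → V → ℚ) (S : Finset V) : ℚ :=
  ∑ q ∈ Finset.univ.filter (fun q : V × V => E q.1 q.2 ∧ q.1 ∈ S ∧ q.2 ∉ S), w q.1 q.2

/-- A maximum weight ideal cut. -/
def MaxIdealCut {V : Type*} [Fintype V] [DecidableEq V] (E : V → V → Prop) [DecidableRel E]
    (s t : V) (w : V → V → ℚ) (S : Finset V) : Prop :=
  IdealCut E s t S ∧ ∀ S' : Finset V, IdealCut E s t S' → cutWeight E w S' ≤ cutWeight E w S

/-- The directed graph is acyclic. -/
def Acyclic {V : Type*} (E : V → V → Prop) : Prop := ∀ v : V, ¬ Relation.TransGen E v v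

/-- Every vertex is reachable from `s` and reaches `t`. -/
def EveryVertexOnPath {V : Type*} (E : V → V → Prop) (s t : V) : Prop :=
  ∀ v : V, Relation.ReflTransGen E s v ∧ Relation.ReflTransGen E v t

lemma idealCut_union {V : Type*} [DecidableEq V] {E : V → V → Prop} {s t : V} {A B : Finset V}
    (hA : IdealCut E s t A) (hB : IdealCut E s t B) : IdealCut E s t (A ∪ B) := by
  obtain ⟨hsA, htA, hcA⟩ := hA; obtain ⟨hsB, htB, hcB⟩ := hB
  refine ⟨Finset.mem_union_left _ hsA, by simp [htA, htB], ?_⟩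
  intro u v he hv
  rcases Finset.mem_union.1 hv with h | h
  · exact Finset.mem_union_left _ (hcA u v he h)
  · exact Finset.mem_union_right _ (hcB u v he h)

lemma idealCut_inter {V : Type*} [DecidableEq V] {E : V → V → Prop} {s t : V} {A B : Finset V}
    (hA : IdealCut E s t A) (hB : IdealCut E s t B) : IdealCut E s t (A ∩ B) := by
  obtain ⟨hsA, htA, hcA⟩ := hA; obtain ⟨hsB, htB, hcB⟩ := hB
  refine ⟨Finset.mem_inter.2 ⟨hsA, hsB⟩, by simp [htA, htB], ?_⟩
  intro u v he hv
  rcases Finset.mem_inter.1 hv with ⟨h1, h2⟩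
  exact Finset.mem_inter.2 ⟨hcA u v he h1, hcB u v he h2⟩

lemma cutWeight_modular {V : Type*} [Fintype V] [DecidableEq V] (E : V → V → Prop)
    [DecidableRel E] (w : V → V → ℚ) {A B : Finset V}
    (hA : ∀ u v : V, E u v → v ∈ A → u ∈ A) (hB : ∀ u v : V, E u v → v ∈ B → u ∈ B) :
    cutWeight E w (A ∪ B) + cutWeight E w (A ∩ B) = cutWeight E w A + cutWeight E w B := by
  simp only [cutWeight, Finset.sum_filter, ← Finset.sum_add_distrib]
  apply Finset.sum_congr rfl
  intro q _
  by_cases hE : E q.1 q.2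
  · have h1 := hA q.1 q.2 hE
    have h2 := hB q.1 q.2 hE
    simp only [Finset.mem_union, Finset.mem_inter]
    by_cases a1 : q.1 ∈ A <;> by_cases a2 : q.2 ∈ A <;>
      by_cases b1 : q.1 ∈ B <;> by_cases b2 : q.2 ∈ B <;> simp_all
  · simp [hE]

/-- The set of maximum weight ideal cuts (identified with their source sides) is closed
under union and intersection, and hence forms a lattice under `∪` (join) and `∩` (meet),
ordered by inclusion. -/
theorem maxIdealCuts_lattice {V : Type*} [Fintype V] [DecidableEq V]
    (E : V → V → Prop) [DecidableRel E] (s t : V) (w : V → V → ℚ)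
    (hacyc : Acyclic E) (hpath : EveryVertexOnPath E s t) :
    ∀ S ∈ {S : Finset V | MaxIdealCut E s t w S},
      ∀ S' ∈ {S : Finset V | MaxIdealCut E s t w S},
        S ∪ S' ∈ {S : Finset V | MaxIdealCut E s t w S} ∧
        S ∩ S' ∈ {S : Finset V | MaxIdealCut E s t w S} := by
  intro A hA B hB
  simp only [Set.mem_setOf_eq] at *
  obtain ⟨hAi, hAm⟩ := hA
  obtain ⟨hBi, hBm⟩ := hB
  have hUi := idealCut_union hAi hBi
  have hIi := idealCut_inter hAi hBi
  have hmod := cutWeight_modular E w hAi.2.2 hBi.2.2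
  have hAB : cutWeight E w A = cutWeight E w B :=
    le_antisymm (hBm A hAi) (hAm B hBi)
  have hU : cutWeight E w (A ∪ B) ≤ cutWeight E w A := hAm _ hUi
  have hI : cutWeight E w (A ∩ B) ≤ cutWeight E w A := hAm _ hIi
  have hUeq : cutWeight E w (A ∪ B) = cutWeight E w A := by linarith
  have hIeq : cutWeight E w (A ∩ B) = cutWeight E w A := by linarith
  exact ⟨⟨hUi, fun S' hS' => hUeq ▸ hAm S' hS'⟩, ⟨hIi, fun S' hS' => hIeq ▸ hAm S' hS'⟩⟩
end

section
/- For closed subsets C and C' of the rotation poset with C ⊆ C', the stable matching generated by C dominates the stable matching generated by C'. -/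
/-- `rB b g` is the rank boy `b` gives girl `g` (smaller = more preferred), and
`rG g b` the rank girl `g` gives boy `b`.  A matching (bijection) `M` is stable if
no pair `(b, g)` prefer each other to their partners. -/
def StableM {B G : Type*} (rB : B → G → ℕ) (rG : G → B → ℕ) (M : B ≃ G) : Prop :=
  ∀ (b : B) (g : G), ¬ (rB b g < rB b (M b) ∧ rG g b < rG g (M.symm g))

/-- The total weight of a matching. -/
def matchWeight {B G : Type*} [Fintype B] (w : B → G → ℚ) (M : B ≃ G) : ℚ :=
  ∑ b, w b (M b)

/-- A maximum weight stable matching. -/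
def MaxWtStable {B G : Type*} [Fintype B] (rB : B → G → ℕ) (rG : G → B → ℕ)
    (w : B → G → ℚ) (M : B ≃ G) : Prop :=
  StableM rB rG M ∧ ∀ N : B ≃ G, StableM rB rG N → matchWeight w N ≤ matchWeight w M

/-- A rotation: a cyclic sequence of `r ≥ 2` distinct pairs `(b_i, g_i)`.
Indices live in `ZMod r` so that `i + 1` wraps around. -/
structure Rotation (B G : Type*) where
  r : ℕ
  two_le : 2 ≤ r
  bs : ZMod r → B
  gs : ZMod r → G
  inj_bs : Function.Injective bs
  inj_gs : Function.Injective gs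

/-- `ρ` is exposed in `M`: each `b_i` is matched to `g_i`, and `g_{i+1} = s_M(b_i)` is
the first girl on `b_i`'s list preferring `b_i` to her `M`-partner. -/
def Exposed {B G : Type*} (rB : B → G → ℕ) (rG : G → B → ℕ) (M : B ≃ G)
    (ρ : Rotation B G) : Prop :=
  (∀ i, M (ρ.bs i) = ρ.gs i) ∧
    (∀ i, rG (ρ.gs (i + 1)) (ρ.bs i) < rG (ρ.gs (i + 1)) (M.symm (ρ.gs (i + 1)))) ∧
    (∀ i, ∀ g : G, rB (ρ.bs i) g < rB (ρ.bs i) (ρ.gs (i + 1)) →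
      ¬ (rG g (ρ.bs i) < rG g (M.symm g)))

/-- `M'` results from `M` by eliminating the rotation `ρ` (exposed in `M`):
each `b_i` moves from `g_i` to `g_{i+1}`, everyone else keeps their partner. -/
def Eliminates {B G : Type*} (rB : B → G → ℕ) (rG : G → B → ℕ)
    (M : B ≃ G) (ρ : Rotation B G) (M' : B ≃ G) : Prop :=
  Exposed rB rG M ρ ∧ (∀ i, M' (ρ.bs i) = ρ.gs (i + 1)) ∧
    ∀ b : B, (∀ i, b ≠ ρ.bs i) → M' b = M b

/-- `ElimChain rB rG M L M'`: the list `L` of rotations can be eliminated one after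
another starting from `M` and ending at `M'`. -/
def ElimChain {B G : Type*} (rB : B → G → ℕ) (rG : G → B → ℕ) :
    (B ≃ G) → List (Rotation B G) → (B ≃ G) → Prop
  | M, [], M' => M = M'
  | M, ρ :: L, M' => ∃ N : B ≃ G, Eliminates rB rG M ρ N ∧ ElimChain rB rG N L M'

/-- The boy-optimal stable matching. -/
def BoyOptimal {B G : Type*} (rB : B → G → ℕ) (rG : G → B → ℕ) (M₀ : B ≃ G) : Prop :=
  StableM rB rG M₀ ∧ ∀ M : B ≃ G, StableM rB rG M → ∀ b, rB b (M₀ b) ≤ rB b (M b)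

/-- The girl-optimal stable matching. -/
def GirlOptimal {B G : Type*} (rB : B → G → ℕ) (rG : G → B → ℕ) (Mz : B ≃ G) : Prop :=
  StableM rB rG Mz ∧ ∀ M : B ≃ G, StableM rB rG M → ∀ g, rG g (Mz.symm g) ≤ rG g (M.symm g)

/-- `ρ` is a rotation of the instance: it is exposed in some stable matching. -/
def IsRotation {B G : Type*} (rB : B → G → ℕ) (rG : G → B → ℕ) (ρ : Rotation B G) : Prop :=
  ∃ M : B ≃ G, StableM rB rG M ∧ Exposed rB rG M ρ

/-- The set of pairs of a rotation (rotations are identified up to cyclic shift by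
having equal pair sets). -/
def rotPairs {B G : Type*} (ρ : Rotation B G) : Set (B × G) :=
  {p | ∃ i, p = (ρ.bs i, ρ.gs i)}

/-- `ρ` moves `b` to `g`: after eliminating `ρ`, `b` is matched to `g`. -/
def MovesTo {B G : Type*} (ρ : Rotation B G) (b : B) (g : G) : Prop :=
  ∃ i, ρ.bs i = b ∧ ρ.gs (i + 1) = g

/-- `ρ` moves `b` from `g`: before eliminating `ρ`, `b` is matched to `g`. -/
def MovesFrom {B G : Type*} (ρ : Rotation B G) (b : B) (g : G) : Prop :=
  ∃ i, ρ.bs i = b ∧ ρ.gs i = g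

/-- `ρ'` precedes `ρ` in the rotation poset: `ρ'` is eliminated (up to cyclic shift)
in every sequence of eliminations from the boy-optimal matching `M₀` to a stable
matching in which `ρ` is exposed. -/
def Precedes {B G : Type*} (rB : B → G → ℕ) (rG : G → B → ℕ)
    (ρ' ρ : Rotation B G) : Prop :=
  ∀ (M₀ : B ≃ G) (L : List (Rotation B G)) (M : B ≃ G),
    BoyOptimal rB rG M₀ → ElimChain rB rG M₀ L M → Exposed rB rG M ρ →
      ∃ ρ'' ∈ L, rotPairs ρ'' = rotPairs ρ'

/-! Induction on `L`. Its first rotation `ρ` is exposed in `M₀` and occurs in `L'`, say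
`L' = A ++ ρ' :: B'`. The rotations of an elimination chain have pairwise distinct pair sets,
and two rotations exposed in the same matching either have the same pair set or share no
boy. Hence `ρ` stays exposed along `A` and its elimination commutes with every rotation of
`A`, so `A ++ B'` is an elimination chain to `M'` from the matching obtained by eliminating
`ρ` from `M₀`, and the induction hypothesis applies. In the base case the claim is that
eliminations only worsen the boys. -/

lemma Rotation.gs_add_one_ne {B G : Type*} (ρ : Rotation B G) (i : ZMod ρ.r) :
    ρ.gs (i + 1) ≠ ρ.gs i := by
  have : Fact (1 < ρ.r) := ⟨ρ.two_le⟩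
  intro h
  simpa using ρ.inj_gs h

section Elimination

variable {B G : Type*} {rB : B → G → ℕ} {rG : G → B → ℕ} {M N : B ≃ G}
  {ρ σ : Rotation B G}

lemma Exposed.gs_add_one_eq (hrB : ∀ b, Function.Injective (rB b))
    (hρ : Exposed rB rG M ρ) (hσ : Exposed rB rG M σ) {i : ZMod ρ.r} {j : ZMod σ.r}
    (hb : ρ.bs i = σ.bs j) : ρ.gs (i + 1) = σ.gs (j + 1) := by
  rcases lt_trichotomy (rB (ρ.bs i) (ρ.gs (i + 1))) (rB (ρ.bs i) (σ.gs (j + 1)))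
    with h | h | h
  · exact absurd (hρ.2.1 i) (hb ▸ hσ.2.2 j _ (hb ▸ h))
  · exact hrB _ h
  · exact absurd (hσ.2.1 j) (hb ▸ hρ.2.2 i _ h)

lemma Exposed.bs_add_natCast_eq (hrB : ∀ b, Function.Injective (rB b))
    (hρ : Exposed rB rG M ρ) (hσ : Exposed rB rG M σ) {i : ZMod ρ.r} {j : ZMod σ.r}
    (hb : ρ.bs i = σ.bs j) (n : ℕ) : ρ.bs (i + n) = σ.bs (j + n) := by
  induction n with
  | zero => simpa using hb
  | succ n ih =>
    apply M.injective
    simp only [Nat.cast_succ, ← add_assoc]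
    rw [hρ.1, hσ.1]
    exact hρ.gs_add_one_eq hrB hσ ih

lemma Exposed.rotPairs_subset (hrB : ∀ b, Function.Injective (rB b))
    (hρ : Exposed rB rG M ρ) (hσ : Exposed rB rG M σ) {i : ZMod ρ.r} {j : ZMod σ.r}
    (hb : ρ.bs i = σ.bs j) : rotPairs ρ ⊆ rotPairs σ := by
  have : NeZero ρ.r := ⟨by have := ρ.two_le; omega⟩
  rintro _ ⟨t, rfl⟩
  obtain ⟨n, rfl⟩ : ∃ n : ℕ, t = i + n :=
    ⟨(t - i).val, by rw [ZMod.natCast_zmod_val, add_sub_cancel]⟩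
  refine ⟨j + n, ?_⟩
  rw [← hρ.1, ← hσ.1, hρ.bs_add_natCast_eq hrB hσ hb]

lemma Exposed.bs_ne_of_rotPairs_ne (hrB : ∀ b, Function.Injective (rB b))
    (hρ : Exposed rB rG M ρ) (hσ : Exposed rB rG M σ) (hne : rotPairs ρ ≠ rotPairs σ)
    (i : ZMod ρ.r) (j : ZMod σ.r) : ρ.bs i ≠ σ.bs j := fun hb =>
  hne ((hρ.rotPairs_subset hrB hσ hb).antisymm (hσ.rotPairs_subset hrB hρ hb.symm))

lemma Exposed.exists_eliminates (hρ : Exposed rB rG M ρ) : ∃ N, Eliminates rB rG M ρ N := by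
  classical
  let cycle : Equiv.Perm G :=
    (Equiv.addRight (1 : ZMod ρ.r)).extendDomain (Equiv.ofInjective ρ.gs ρ.inj_gs)
  have cycle_gs (i : ZMod ρ.r) : cycle (ρ.gs i) = ρ.gs (i + 1) := by
    simpa using Equiv.Perm.extendDomain_apply_image (Equiv.addRight (1 : ZMod ρ.r))
      (Equiv.ofInjective ρ.gs ρ.inj_gs) i
  refine ⟨M.trans cycle, hρ, fun i => by simp [hρ.1, cycle_gs], fun b hb => ?_⟩
  refine Equiv.Perm.extendDomain_apply_not_subtype _ _ ?_
  rintro ⟨i, hi⟩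
  exact hb i (M.injective (by rw [hρ.1, hi]))

lemma Eliminates.symm_gs_add_one (h : Eliminates rB rG M ρ N) (i : ZMod ρ.r) :
    N.symm (ρ.gs (i + 1)) = ρ.bs i :=
  N.symm_apply_eq.mpr (h.2.1 i).symm

lemma Eliminates.symm_apply_of_forall_ne (h : Eliminates rB rG M ρ N) {g : G}
    (hg : ∀ i, g ≠ ρ.gs i) : N.symm g = M.symm g := by
  have hb (i : ZMod ρ.r) : M.symm g ≠ ρ.bs i := fun hi =>
    hg i (by rw [← h.1.1 i, ← hi, Equiv.apply_symm_apply])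
  rw [Equiv.symm_apply_eq, h.2.2 _ hb, Equiv.apply_symm_apply]

lemma Eliminates.girl_rank_le (h : Eliminates rB rG M ρ N) (g : G) :
    rG g (N.symm g) ≤ rG g (M.symm g) := by
  by_cases hg : ∃ i, g = ρ.gs (i + 1)
  · obtain ⟨i, rfl⟩ := hg
    rw [h.symm_gs_add_one]
    exact (h.1.2.1 i).le
  · push Not at hg
    rw [h.symm_apply_of_forall_ne fun i => by simpa using hg (i - 1)]

lemma Eliminates.stableM (hM : StableM rB rG M) (h : Eliminates rB rG M ρ N) :
    StableM rB rG N := by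
  rintro b g ⟨hb, hg⟩
  replace hg := hg.trans_le (h.girl_rank_le g)
  by_cases hbρ : ∃ i, b = ρ.bs i
  · obtain ⟨i, rfl⟩ := hbρ
    exact h.1.2.2 i g (h.2.1 i ▸ hb) hg
  · push Not at hbρ
    exact hM b g ⟨h.2.2 b hbρ ▸ hb, hg⟩

lemma Exposed.rank_le_rank_gs_add_one (hM : StableM rB rG M) (hρ : Exposed rB rG M ρ)
    (i : ZMod ρ.r) : rB (ρ.bs i) (ρ.gs i) ≤ rB (ρ.bs i) (ρ.gs (i + 1)) := by
  by_contra hlt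
  exact hM _ _ ⟨hρ.1 i ▸ not_le.mp hlt, hρ.2.1 i⟩

lemma Exposed.rank_lt_rank_gs_add_one (hrB : ∀ b, Function.Injective (rB b))
    (hM : StableM rB rG M) (hρ : Exposed rB rG M ρ) (i : ZMod ρ.r) :
    rB (ρ.bs i) (ρ.gs i) < rB (ρ.bs i) (ρ.gs (i + 1)) :=
  (hρ.rank_le_rank_gs_add_one hM i).lt_of_ne fun heq => ρ.gs_add_one_ne i (hrB _ heq).symm

lemma Eliminates.rank_le (hM : StableM rB rG M) (h : Eliminates rB rG M ρ N) (b : B) :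
    rB b (M b) ≤ rB b (N b) := by
  by_cases hb : ∃ i, b = ρ.bs i
  · obtain ⟨i, rfl⟩ := hb
    rw [h.2.1 i, h.1.1 i]
    exact h.1.rank_le_rank_gs_add_one hM i
  · push Not at hb
    rw [h.2.2 b hb]

lemma Eliminates.eq_of_rotPairs_eq (hrB : ∀ b, Function.Injective (rB b)) {N' : B ≃ G}
    (h : Eliminates rB rG M ρ N) (h' : Eliminates rB rG M σ N')
    (hp : rotPairs ρ = rotPairs σ) : N = N' := by
  ext b
  by_cases hb : ∃ i, b = ρ.bs i
  · obtain ⟨i, rfl⟩ := hb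
    obtain ⟨j, hj⟩ : (ρ.bs i, ρ.gs i) ∈ rotPairs σ := hp ▸ ⟨i, rfl⟩
    have hbj : ρ.bs i = σ.bs j := congrArg Prod.fst hj
    rw [h.2.1 i, hbj, h'.2.1 j]
    exact h.1.gs_add_one_eq hrB h'.1 hbj
  · push Not at hb
    have hb' : ∀ j, b ≠ σ.bs j := by
      intro j hj
      obtain ⟨i, hi⟩ : (σ.bs j, σ.gs j) ∈ rotPairs ρ := hp ▸ ⟨j, rfl⟩
      exact hb i (hj.trans (congrArg Prod.fst hi))
    rw [h.2.2 b hb, h'.2.2 b hb']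

lemma Exposed.of_eliminates_of_disjoint
    (hdisj : ∀ (i : ZMod ρ.r) (j : ZMod σ.r), ρ.bs i ≠ σ.bs j) (hρ : Exposed rB rG M ρ)
    (hσ : Eliminates rB rG M σ N) : Exposed rB rG N ρ := by
  have hgs (i : ZMod ρ.r) (j : ZMod σ.r) : ρ.gs i ≠ σ.gs j := fun hg =>
    hdisj i j (M.injective (by rw [hρ.1, hσ.1.1, hg]))
  refine ⟨fun i => ?_, fun i => ?_, fun i g hlt => ?_⟩
  · rw [hσ.2.2 _ (hdisj i), hρ.1]
  · rw [hσ.symm_apply_of_forall_ne (hgs (i + 1))]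
    exact hρ.2.1 i
  · exact fun hg => hρ.2.2 i g hlt (hg.trans_le (hσ.girl_rank_le g))

lemma Eliminates.of_eliminates_of_disjoint {Mσ P : B ≃ G}
    (hdisj : ∀ (i : ZMod ρ.r) (j : ZMod σ.r), ρ.bs i ≠ σ.bs j) (hρ : Eliminates rB rG M ρ N)
    (hσ : Eliminates rB rG M σ Mσ) (hσρ : Eliminates rB rG Mσ ρ P) :
    Eliminates rB rG N σ P := by
  refine ⟨hσ.1.of_eliminates_of_disjoint (fun j i => (hdisj i j).symm) hρ,
    fun j => ?_, fun b hbσ => ?_⟩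
  · rw [hσρ.2.2 _ fun i => (hdisj i j).symm, hσ.2.1 j]
  · by_cases hbρ : ∃ i, b = ρ.bs i
    · obtain ⟨i, rfl⟩ := hbρ
      rw [hσρ.2.1 i, hρ.2.1 i]
    · push Not at hbρ
      rw [hσρ.2.2 b hbρ, hσ.2.2 b hbσ, hρ.2.2 b hbρ]

end Elimination

section Chain

variable {B G : Type*} {rB : B → G → ℕ} {rG : G → B → ℕ}

lemma ElimChain.stableM : ∀ {M N : B ≃ G} {L : List (Rotation B G)},
    StableM rB rG M → ElimChain rB rG M L N → StableM rB rG N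
  | _, _, [], hM, h => h ▸ hM
  | _, _, _ :: _, hM, ⟨_, hρ, h⟩ => h.stableM (hρ.stableM hM)

lemma ElimChain.rank_le : ∀ {M N : B ≃ G} {L : List (Rotation B G)},
    StableM rB rG M → ElimChain rB rG M L N → ∀ b, rB b (M b) ≤ rB b (N b)
  | _, _, [], _, h, _ => h ▸ le_rfl
  | _, _, _ :: _, hM, ⟨_, hρ, h⟩, b =>
    (hρ.rank_le hM b).trans (h.rank_le (hρ.stableM hM) b)

lemma ElimChain.exists_exposed_of_mem {τ : Rotation B G} : ∀ {M N : B ≃ G}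
    {L : List (Rotation B G)}, StableM rB rG M → ElimChain rB rG M L N → τ ∈ L →
    ∃ P, (∀ b, rB b (M b) ≤ rB b (P b)) ∧ Exposed rB rG P τ
  | _, _, [], _, _, hτ => absurd hτ List.not_mem_nil
  | M, _, _ :: _, hM, ⟨_, hρ, h⟩, hτ => by
    rcases List.mem_cons.mp hτ with rfl | hτ
    · exact ⟨M, fun _ => le_rfl, hρ.1⟩
    · obtain ⟨P, hNP, hP⟩ := h.exists_exposed_of_mem (hρ.stableM hM) hτ
      exact ⟨P, fun b => (hρ.rank_le hM b).trans (hNP b), hP⟩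

/-- After eliminating `ρ`, its boys are strictly worse off than in any matching exposing `ρ`,
and boys only get worse along a chain. -/
lemma Eliminates.rotPairs_ne_of_mem_elimChain (hrB : ∀ b, Function.Injective (rB b))
    {M N N' : B ≃ G} {ρ τ : Rotation B G} {L : List (Rotation B G)}
    (hM : StableM rB rG M) (hρ : Eliminates rB rG M ρ N) (hL : ElimChain rB rG N L N')
    (hτ : τ ∈ L) : rotPairs τ ≠ rotPairs ρ := by
  intro hp
  obtain ⟨P, hNP, hτP⟩ := hL.exists_exposed_of_mem (hρ.stableM hM) hτ
  obtain ⟨j, hj⟩ : (ρ.bs 0, ρ.gs 0) ∈ rotPairs τ := hp ▸ ⟨0, rfl⟩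
  obtain ⟨hbj, hgj⟩ := Prod.mk.inj hj
  have hP : P (ρ.bs 0) = ρ.gs 0 := by rw [hbj, hτP.1, hgj]
  have hle := hNP (ρ.bs 0)
  rw [hρ.2.1 0, hP] at hle
  exact (hρ.1.rank_lt_rank_gs_add_one hrB hM 0).not_ge hle

lemma ElimChain.pairwise_rotPairs_ne (hrB : ∀ b, Function.Injective (rB b)) :
    ∀ {M N : B ≃ G} {L : List (Rotation B G)}, StableM rB rG M →
    ElimChain rB rG M L N → L.Pairwise fun σ τ => rotPairs σ ≠ rotPairs τ
  | _, _, [], _, _ => List.Pairwise.nil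
  | _, _, _ :: _, hM, ⟨_, hρ, h⟩ =>
    List.Pairwise.cons (fun _ hτ => (hρ.rotPairs_ne_of_mem_elimChain hrB hM h hτ).symm)
      (h.pairwise_rotPairs_ne hrB (hρ.stableM hM))

lemma ElimChain.of_append_cons_of_eliminates (hrB : ∀ b, Function.Injective (rB b))
    {ρ ρ' : Rotation B G} {B' : List (Rotation B G)} {M' : B ≃ G}
    (hp : rotPairs ρ' = rotPairs ρ) : ∀ {A : List (Rotation B G)} {M N : B ≃ G},
    ElimChain rB rG M (A ++ ρ' :: B') M' → Eliminates rB rG M ρ N →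
    (∀ σ ∈ A, rotPairs σ ≠ rotPairs ρ) → ElimChain rB rG N (A ++ B') M'
  | [], _, _, ⟨_, hρ', h⟩, hρ, _ => by rwa [hρ.eq_of_rotPairs_eq hrB hρ' hp.symm]
  | σ :: _, _, _, ⟨_, hσ, h⟩, hρ, hA => by
    have hdisj := hρ.1.bs_ne_of_rotPairs_ne hrB hσ.1 (hA σ List.mem_cons_self).symm
    obtain ⟨P, hσρ⟩ := (hρ.1.of_eliminates_of_disjoint hdisj hσ).exists_eliminates
    exact ⟨P, hρ.of_eliminates_of_disjoint hdisj hσ hσρ,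
      h.of_append_cons_of_eliminates hrB hp hσρ fun τ hτ => hA τ (List.mem_cons_of_mem _ hτ)⟩

lemma ElimChain.rank_le_of_forall_rotPairs (hrB : ∀ b, Function.Injective (rB b)) :
    ∀ {M₁ M M' : B ≃ G} {L L' : List (Rotation B G)}, StableM rB rG M₁ →
    ElimChain rB rG M₁ L M → ElimChain rB rG M₁ L' M' →
    (∀ ρ ∈ L, ∃ ρ' ∈ L', rotPairs ρ' = rotPairs ρ) → ∀ b, rB b (M b) ≤ rB b (M' b)
  | _, _, _, [], _, hM₁, hL, hL', _ => hL ▸ hL'.rank_le hM₁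
  | _, _, _, ρ :: _, _, hM₁, ⟨_, hρ, hL⟩, hL', hsub => by
    obtain ⟨ρ', hρ'L', hp⟩ := hsub ρ List.mem_cons_self
    obtain ⟨A, B', rfl⟩ := List.append_of_mem hρ'L'
    have hA : ∀ σ ∈ A, rotPairs σ ≠ rotPairs ρ := fun σ hσ => by
      rw [← hp]
      exact (List.pairwise_append.mp (hL'.pairwise_rotPairs_ne hrB hM₁)).2.2 σ hσ ρ'
        List.mem_cons_self
    refine hL.rank_le_of_forall_rotPairs hrB (hρ.stableM hM₁)
      (hL'.of_append_cons_of_eliminates hrB hp hρ hA) fun τ hτ => ?_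
    obtain ⟨σ, hσ, hστ⟩ := hsub τ (List.mem_cons_of_mem _ hτ)
    simp only [List.mem_append, List.mem_cons] at hσ
    rcases hσ with hσA | rfl | hσB'
    · exact ⟨σ, List.mem_append_left _ hσA, hστ⟩
    · exact absurd (hστ.symm.trans hp) (hρ.rotPairs_ne_of_mem_elimChain hrB hM₁ hL hτ)
    · exact ⟨σ, List.mem_append_right _ hσB', hστ⟩

end Chain

theorem closed_subset_domination_general {B G : Type*}
    (rB : B → G → ℕ) (rG : G → B → ℕ)
    (hrB : ∀ b, Function.Injective (rB b))
    (M₀ : B ≃ G) (hM₀ : BoyOptimal rB rG M₀)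
    (L L' : List (Rotation B G)) (M M' : B ≃ G)
    (hL : ElimChain rB rG M₀ L M) (hL' : ElimChain rB rG M₀ L' M')
    (hsub : ∀ ρ ∈ L, ∃ ρ' ∈ L', rotPairs ρ' = rotPairs ρ) :
    ∀ b, rB b (M b) ≤ rB b (M' b) :=
  hL.rank_le_of_forall_rotPairs hrB hM₀.1 hL' hsub

/-- For closed subsets `C ⊆ C'` of the rotation poset, the stable matching generated by
`C` dominates the one generated by `C'`: if `M` and `M'` are obtained from the
boy-optimal matching `M₀` by eliminating lists of rotations `L` and `L'` with every
rotation of `L` occurring (up to cyclic shift) in `L'`, then every boy weakly prefers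
his `M`-partner to his `M'`-partner. -/
theorem closed_subset_domination {B G : Type*} [Fintype B] [Fintype G]
    [DecidableEq B] [DecidableEq G]
    (rB : B → G → ℕ) (rG : G → B → ℕ)
    (hrB : ∀ b, Function.Injective (rB b)) (hrG : ∀ g, Function.Injective (rG g))
    (M₀ : B ≃ G) (hM₀ : BoyOptimal rB rG M₀)
    (L L' : List (Rotation B G)) (M M' : B ≃ G)
    (hL : ElimChain rB rG M₀ L M) (hL' : ElimChain rB rG M₀ L' M')
    (hsub : ∀ ρ ∈ L, ∃ ρ' ∈ L', rotPairs ρ' = rotPairs ρ) :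
    ∀ b, rB b (M b) ≤ rB b (M' b) :=
  closed_subset_domination_general rB rG hrB M₀ hM₀ L L' M M' hL hL' hsub
end
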